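/- In a strict finitistic model with the formula prevalence property, the atomic prevalence property implies the full formula prevalence property: if every assertible closed atom is prevalent, then every assertible closed formula is prevalent. -/
import Mathlib


/-- Formulas of the (domain-extended) language of strict finitistic first-order
logic: atoms `atom P ds` (predicate symbol `P` applied to domain elements),
the existence predicate `E`, the connectives, global negation `neg`, and the
two modes (global / local) of universal and existential quantification. -/
inductive Fm (D : Type) : Type
  | top
  | bot
  | atom (P : ℕ) (ds : List D)
  | E (d : D)
  | conj (A B : Fm D)
  | disj (A B : Fm D)
  | impl (A B : Fm D)
  | neg (A : Fm D)
  | allG (A : D → Fm D)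
  | allL (A : D → Fm D)
  | exG (A : D → Fm D)
  | exL (A : D → Fm D)

/-- Weak negation `⌐A := A → ⊥`. -/
def Fm.wneg {D : Type} (A : Fm D) : Fm D := Fm.impl A Fm.bot

/-- A strict finitistic model: a rooted partially ordered Kripke frame with a
constant domain `D` and a monotone valuation of atoms (including the
existence predicate `E`). -/
structure SFModel (D : Type) : Type 1 where
  K : Type
  le : K → K → Prop
  refl : ∀ k, le k k
  trans : ∀ {a b c}, le a b → le b c → le a c
  antisymm : ∀ {a b}, le a b → le b a → a = b
  root : K
  root_le : ∀ k, le root k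
  atomVal : ℕ → List D → K → Prop
  EVal : D → K → Prop
  atom_mono : ∀ {P ds k k'}, le k k' → atomVal P ds k → atomVal P ds k'
  E_mono : ∀ {d k k'}, le k k' → EVal d k → EVal d k'

/-- The strict finitistic forcing relation `k ⊨ A`. -/
def SFModel.force {D : Type} (W : SFModel D) : W.K → Fm D → Prop
  | _, Fm.top => True
  | _, Fm.bot => False
  | k, Fm.atom P ds => W.atomVal P ds k
  | k, Fm.E d => W.EVal d k
  | k, Fm.conj A B => W.force k A ∧ W.force k B
  | k, Fm.disj A B => W.force k A ∨ W.force k B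
  | k, Fm.impl A B => ∀ k', W.le k k' → W.force k' A → ∃ k'', W.le k' k'' ∧ W.force k'' B
  | _, Fm.neg A => ∀ l, ¬ W.force l A
  | k, Fm.allG A => ∀ (d : D) (k' : W.K), W.le k k' → ∃ k'', W.le k' k'' ∧ W.force k'' (A d)
  | k, Fm.allL A => ∀ (d : D) (k' : W.K), W.le k k' → W.EVal d k' →
      ∃ k'', W.le k' k'' ∧ W.force k'' (A d)
  | k, Fm.exG A => ∃ d : D, W.force k (A d)
  | k, Fm.exL A => ∃ d : D, W.EVal d k ∧ W.force k (A d)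

/-- `A` is valid in `W`: forced at every node. -/
def SFModel.valid {D : Type} (W : SFModel D) (A : Fm D) : Prop := ∀ k, W.force k A

/-- `A` is assertible in `W`: forced at some node. -/
def SFModel.assertible {D : Type} (W : SFModel D) (A : Fm D) : Prop := ∃ k, W.force k A

/-- `A` is prevalent in `W`: above every node it is eventually forced. -/
def SFModel.prevalent {D : Type} (W : SFModel D) (A : Fm D) : Prop :=
  ∀ k, ∃ k', W.le k k' ∧ W.force k' A

/-- Atomic prevalence property: every assertible closed atom (including `E`)
is prevalent. -/
def SFModel.atomicPrev {D : Type} (W : SFModel D) : Prop :=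
  (∀ (P : ℕ) (ds : List D), W.assertible (Fm.atom P ds) → W.prevalent (Fm.atom P ds)) ∧
  (∀ d : D, W.assertible (Fm.E d) → W.prevalent (Fm.E d))

/-- Formula prevalence property: every assertible closed formula is prevalent. -/
def SFModel.formulaPrev {D : Type} (W : SFModel D) : Prop :=
  ∀ A : Fm D, W.assertible A → W.prevalent A

/-- Object prevalence property: `E(d)` is prevalent for every domain element. -/
def SFModel.objectPrev {D : Type} (W : SFModel D) : Prop :=
  ∀ d : D, W.prevalent (Fm.E d)

/-- A prevalent model: both the formula and object prevalence properties. -/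
def SFModel.prevModel {D : Type} (W : SFModel D) : Prop :=
  W.formulaPrev ∧ W.objectPrev


lemma SFModel.force_mono {D : Type} (W : SFModel D) :
    ∀ (A : Fm D) {k k' : W.K}, W.le k k' → W.force k A → W.force k' A := by
  intro A
  induction A with
  | top => intro k k' _ _; trivial
  | bot => intro k k' _ hf; exact hf
  | atom P ds => intro k k' hle hf; exact W.atom_mono hle hf
  | E d => intro k k' hle hf; exact W.E_mono hle hf
  | conj A B ihA ihB => intro k k' hle hf; exact ⟨ihA hle hf.1, ihB hle hf.2⟩
  | disj A B ihA ihB =>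
    intro k k' hle hf
    rcases hf with hf | hf
    · exact Or.inl (ihA hle hf)
    · exact Or.inr (ihB hle hf)
  | impl A B ihA ihB =>
    intro k k' hle hf
    intro k'' hle' hA
    exact hf k'' (W.trans hle hle') hA
  | neg A ih => intro k k' _ hf; exact hf
  | allG A ih =>
    intro k k' hle hf d k'' hle'
    exact hf d k'' (W.trans hle hle')
  | allL A ih =>
    intro k k' hle hf d k'' hle' hE
    exact hf d k'' (W.trans hle hle') hE
  | exG A ih =>
    intro k k' hle hf
    rcases hf with ⟨d, hd⟩
    exact ⟨d, ih d hle hd⟩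
  | exL A ih =>
    intro k k' hle hf
    rcases hf with ⟨d, hE, hd⟩
    exact ⟨d, W.E_mono hle hE, ih d hle hd⟩

/-- In a strict finitistic model, the atomic prevalence
property implies the full formula prevalence property: if every assertible
closed atom is prevalent, then every assertible closed formula is prevalent. -/
theorem atomicPrev_implies_formulaPrev {D : Type} [Nonempty D] (W : SFModel D)
    (h : W.atomicPrev) : W.formulaPrev := by
  intro A
  induction A with
  | top => intro _; intro k; exact ⟨k, W.refl k, trivial⟩
  | bot => rintro ⟨k, hk⟩; exact absurd hk id
  | atom P ds => exact h.1 P ds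
  | E d => exact h.2 d
  | conj A B ihA ihB =>
    rintro ⟨k0, hA, hB⟩ k
    obtain ⟨k1, hk1, hA1⟩ := ihA ⟨k0, hA⟩ k
    obtain ⟨k2, hk2, hB2⟩ := ihB ⟨k0, hB⟩ k1
    exact ⟨k2, W.trans hk1 hk2, W.force_mono A hk2 hA1, hB2⟩
  | disj A B ihA ihB =>
    rintro ⟨k0, hAB⟩ k
    rcases hAB with hA | hB
    · obtain ⟨k1, hk1, hA1⟩ := ihA ⟨k0, hA⟩ k
      exact ⟨k1, hk1, Or.inl hA1⟩
    · obtain ⟨k1, hk1, hB1⟩ := ihB ⟨k0, hB⟩ k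
      exact ⟨k1, hk1, Or.inr hB1⟩
  | impl A B ihA ihB =>
    rintro ⟨k0, hAB⟩ k
    refine ⟨k, W.refl k, ?_⟩
    intro k' _ hA
    -- A is assertible, hence prevalent
    have prevA := ihA ⟨k', hA⟩
    obtain ⟨k1, hk1, hA1⟩ := prevA k0
    obtain ⟨k2, hk2, hB2⟩ := hAB k1 hk1 hA1
    have prevB := ihB ⟨k2, hB2⟩
    obtain ⟨k3, hk3, hB3⟩ := prevB k'
    exact ⟨k3, hk3, hB3⟩
  | neg A ih =>
    rintro ⟨k0, hk0⟩ k
    exact ⟨k, W.refl k, hk0⟩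
  | allG A ih =>
    rintro ⟨k0, hk0⟩ k
    refine ⟨k, W.refl k, ?_⟩
    intro d k' _
    obtain ⟨k1, hk1, hA1⟩ := hk0 d k0 (W.refl k0)
    obtain ⟨k2, hk2, hA2⟩ := ih d ⟨k1, hA1⟩ k'
    exact ⟨k2, hk2, hA2⟩
  | allL A ih =>
    rintro ⟨k0, hk0⟩ k
    refine ⟨k, W.refl k, ?_⟩
    intro d k' _ hE
    -- E d is assertible, hence prevalent
    obtain ⟨k1, hk1, hE1⟩ := h.2 d ⟨k', hE⟩ k0
    obtain ⟨k2, hk2, hA2⟩ := hk0 d k1 hk1 hE1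
    obtain ⟨k3, hk3, hA3⟩ := ih d ⟨k2, hA2⟩ k'
    exact ⟨k3, hk3, hA3⟩
  | exG A ih =>
    rintro ⟨k0, d, hd⟩ k
    obtain ⟨k1, hk1, hA1⟩ := ih d ⟨k0, hd⟩ k
    exact ⟨k1, hk1, d, hA1⟩
  | exL A ih =>
    rintro ⟨k0, d, hE, hd⟩ k
    obtain ⟨k1, hk1, hE1⟩ := h.2 d ⟨k0, hE⟩ k
    obtain ⟨k2, hk2, hA2⟩ := ih d ⟨k0, hd⟩ k1
    exact ⟨k2, W.trans hk1 hk2, d, W.E_mono hk2 hE1, hA2⟩
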